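/- arXiv:2007.04202 — 2 statements merged into one kernel-verified Lean document; each statement's English description precedes it below -/
import Mathlib

section
/- For the stochastic bilinear game with A ≠ 0, assume the solution set X* = {x ∈ ℝ^d : ξ(x) = 0} is nonempty. Then min H = 0, X* is exactly the set of minimizers of H, and H is σ_min(A)²-quasi-strongly convex, where σ_min(A) is the smallest nonzero singular value of A: for every x ∈ ℝ^d, writing x̄ for the orthogonal projection of x onto X* (a nonempty affine subspace), one has 0 = H(x̄) ≥ H(x) + ⟨∇H(x), x̄ − x⟩ + (σ_min(A)²/2)‖x̄ − x‖². -/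
/-!
STATEMENT 1: For the stochastic bilinear game with A ≠ 0 and nonempty solution set
X* = {x : ξ(x) = 0}: min H = 0, X* is exactly the set of minimizers of H, and H is
σ_min(A)²-quasi-strongly convex with respect to the orthogonal projection onto X*.
-/

open scoped RealInnerProductSpace BigOperators

noncomputable section

/-- Squared smallest nonzero singular value of A, i.e. the smallest nonzero
eigenvalue of Aᵀ A. -/
def sigmaMinSq {d1 d2 : ℕ} (A : Matrix (Fin d1) (Fin d2) ℝ) : ℝ :=
  sInf {t : ℝ | t ≠ 0 ∧ ∃ v : Fin d2 → ℝ, v ≠ 0 ∧ (A.transpose * A).mulVec v = t • v}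

/-- The signed gradient field ξ(x) = (A x₂ + b, −(Aᵀ x₁ + c)) of the bilinear game. -/
def xiBar {d1 d2 : ℕ} (A : Matrix (Fin d1) (Fin d2) ℝ) (b : Fin d1 → ℝ) (c : Fin d2 → ℝ)
    (x : EuclideanSpace ℝ (Fin d1 ⊕ Fin d2)) : EuclideanSpace ℝ (Fin d1 ⊕ Fin d2) :=
  (WithLp.equiv 2 _).symm (Sum.elim
    (fun a => A.mulVec (fun j => x (Sum.inr j)) a + b a)
    (fun j => -(A.transpose.mulVec (fun a => x (Sum.inl a)) j + c j)))

/-- The Hamiltonian H(x) = ½‖ξ(x)‖². -/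
def Ham {d1 d2 : ℕ} (A : Matrix (Fin d1) (Fin d2) ℝ) (b : Fin d1 → ℝ) (c : Fin d2 → ℝ)
    (x : EuclideanSpace ℝ (Fin d1 ⊕ Fin d2)) : ℝ :=
  (1 / 2 : ℝ) * ‖xiBar A b c x‖ ^ 2


/-!
The field `ξ` is affine, `ξ x = J x + y₀` with `J = [[0, A], [-Aᵀ, 0]]`, so `H` is the
least-squares objective `½‖J x + y₀‖²` with gradient `Jᵀ (J x + y₀)`. The solution set is
`x̄ + ker J`, so for the nearest solution `x̄` the residual `u = x - x̄` is orthogonal to `ker J`;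
then `ξ x = J u` and `⟪∇H x, x̄ - x⟫ = -‖J u‖²`, and the claim reduces to
`σ ‖u‖² ≤ ‖J u‖²` on `(ker J)ᗮ`. Expanding `u` in an eigenbasis of `JᵀJ = diag (AAᵀ, AᵀA)`
proves this for every `σ` below the nonzero eigenvalues of `JᵀJ`, and `v ↦ Aᵀ v` maps an
eigenvector of `AAᵀ` for `μ ≠ 0` to one of `AᵀA`, so `σ_min(A)²` qualifies.
-/

open Matrix ContinuousLinearMap WithLp

theorem setOf_eq_zero_eq_setOf_forall_le {X : Type*} {f : X → ℝ} (hf : ∀ x, 0 ≤ f x)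
    (hne : ∃ x, f x = 0) : {x | f x = 0} = {x | ∀ y, f x ≤ f y} := by
  obtain ⟨x₀, hx₀⟩ := hne
  ext x
  exact ⟨fun hx y => hx ▸ hf y, fun hx => le_antisymm (hx₀ ▸ hx x₀) (hf x)⟩

section LeastSquares

variable {E F : Type*} [NormedAddCommGroup E] [InnerProductSpace ℝ E]

theorem Submodule.mem_orthogonal_of_forall_norm_le_norm_sub (K : Submodule ℝ E) {u : E}
    (h : ∀ w ∈ K, ‖u‖ ≤ ‖u - w‖) : u ∈ Kᗮ := by
  have hmin : ‖u - 0‖ = ⨅ w : (K : Set E), ‖u - w‖ := by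
    refine le_antisymm ?_ ?_
    · rw [sub_zero]
      exact le_ciInf fun w => h w w.2
    · exact ciInf_le ⟨0, by rintro _ ⟨w, rfl⟩; positivity⟩ (⟨0, K.zero_mem⟩ : (K : Set E))
  simpa [Submodule.mem_orthogonal'] using
    (K.norm_eq_iInf_iff_real_inner_eq_zero K.zero_mem).1 hmin

theorem LinearMap.IsSymmetric.mul_norm_sq_le_inner_of_mem_orthogonal_ker [FiniteDimensional ℝ E]
    {T : E →ₗ[ℝ] E} (hT : T.IsSymmetric) {σ : ℝ}
    (hσ : ∀ (μ : ℝ) (v : E), v ≠ 0 → T v = μ • v → μ ≠ 0 → σ ≤ μ)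
    {u : E} (hu : u ∈ (LinearMap.ker T)ᗮ) : σ * ‖u‖ ^ 2 ≤ ⟪T u, u⟫ := by
  let B := hT.eigenvectorBasis (n := Module.finrank ℝ E) rfl
  let μ := hT.eigenvalues (n := Module.finrank ℝ E) rfl
  have hB : ∀ i, T (B i) = μ i • B i := by
    intro i
    simpa only [RCLike.ofReal_real_eq_id, id_eq] using hT.apply_eigenvectorBasis rfl i
  have hTu : ⟪T u, u⟫ = ∑ i, μ i * ⟪B i, u⟫ ^ 2 := by
    rw [← B.sum_inner_mul_inner (T u) u]
    refine Finset.sum_congr rfl fun i _ => ?_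
    rw [hT, hB, real_inner_smul_right, real_inner_comm u]
    ring
  rw [hTu, ← B.sum_sq_inner_right, Finset.mul_sum]
  refine Finset.sum_le_sum fun i _ => ?_
  by_cases hμ : μ i = 0
  · have hker : B i ∈ LinearMap.ker T := by simp [hB, hμ]
    simp [(Submodule.mem_orthogonal _ u).1 hu _ hker, hμ]
  · exact mul_le_mul_of_nonneg_right (hσ _ _ (B.orthonormal.ne_zero i) (hB i) hμ) (sq_nonneg _)

variable [CompleteSpace E] [NormedAddCommGroup F] [InnerProductSpace ℝ F] [CompleteSpace F]

theorem ContinuousLinearMap.mul_norm_sq_le_norm_apply_sq_of_mem_orthogonal_ker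
    [FiniteDimensional ℝ E] (L : E →L[ℝ] F) {σ : ℝ}
    (hσ : ∀ (μ : ℝ) (v : E), v ≠ 0 → (adjoint L ∘L L) v = μ • v → μ ≠ 0 → σ ≤ μ)
    {u : E} (hu : u ∈ L.kerᗮ) : σ * ‖u‖ ^ 2 ≤ ‖L u‖ ^ 2 := by
  have hT : (adjoint L ∘L L : E →ₗ[ℝ] E).IsSymmetric := fun x y => by
    simp [adjoint_inner_left, adjoint_inner_right]
  rw [← real_inner_self_eq_norm_sq (L u), ← adjoint_inner_left]
  exact hT.mul_norm_sq_le_inner_of_mem_orthogonal_ker hσ (by rwa [← ker_adjoint_comp_self] at hu)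

theorem hasGradientAt_half_norm_sq_affine (L : E →L[ℝ] F) (y₀ : F) (x : E) :
    HasGradientAt (fun x => (1 / 2 : ℝ) * ‖L x + y₀‖ ^ 2) (adjoint L (L x + y₀)) x := by
  rw [hasGradientAt_iff_hasFDerivAt]
  refine (((L.hasFDerivAt.add_const y₀).norm_sq).const_mul (1 / 2 : ℝ)).congr_fderiv ?_
  ext h
  simp [adjoint_inner_left]

theorem half_norm_sq_affine_quasi_strongly_convex (L : E →L[ℝ] F) (y₀ : F) {σ : ℝ}
    (hσ : ∀ u ∈ L.kerᗮ, σ * ‖u‖ ^ 2 ≤ ‖L u‖ ^ 2) {x xbar : E} (hxbar : L xbar + y₀ = 0)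
    (hproj : ∀ y, L y + y₀ = 0 → ‖x - xbar‖ ≤ ‖x - y‖) :
    1 / 2 * ‖L x + y₀‖ ^ 2 + ⟪adjoint L (L x + y₀), xbar - x⟫ + σ / 2 * ‖xbar - x‖ ^ 2 ≤ 0 := by
  have hres : L x + y₀ = L (x - xbar) := by
    rw [map_sub, ← add_zero (L x - L xbar), ← hxbar]
    abel
  have hperp : x - xbar ∈ L.kerᗮ := by
    refine Submodule.mem_orthogonal_of_forall_norm_le_norm_sub _ fun w hw => ?_
    have hw : L w = 0 := hw
    rw [← sub_add_eq_sub_sub]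
    exact hproj (xbar + w) (by rw [map_add, hw, add_zero, hxbar])
  have hinner : ⟪adjoint L (L (x - xbar)), xbar - x⟫ = -‖L (x - xbar)‖ ^ 2 := by
    rw [adjoint_inner_left, ← neg_sub x xbar, map_neg, inner_neg_right,
      real_inner_self_eq_norm_sq]
  rw [hres, hinner, ← neg_sub x xbar, norm_neg]
  linarith [hσ _ hperp]

end LeastSquares

section GameMatrix

variable {m n : Type*} [Fintype m] [Fintype n]

theorem nonneg_of_transpose_mul_self_mulVec_eq_smul {A : Matrix m n ℝ} {μ : ℝ} {v : n → ℝ}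
    (hv : v ≠ 0) (h : (Aᵀ * A) *ᵥ v = μ • v) : 0 ≤ μ := by
  have hq := (posSemidef_conjTranspose_mul_self A).dotProduct_mulVec_nonneg v
  rw [conjTranspose_eq_transpose_of_trivial, h, dotProduct_smul, smul_eq_mul] at hq
  exact nonneg_of_mul_nonneg_left hq (dotProduct_star_self_pos_iff.2 hv)

def gameMatrix (A : Matrix m n ℝ) : Matrix (m ⊕ n) (m ⊕ n) ℝ :=
  fromBlocks 0 A (-Aᵀ) 0

theorem gameMatrix_transpose_mul_self (A : Matrix m n ℝ) :
    (gameMatrix A)ᵀ * gameMatrix A = fromBlocks (A * Aᵀ) 0 0 (Aᵀ * A) := by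
  simp [gameMatrix, fromBlocks_transpose, fromBlocks_multiply]

variable [DecidableEq m] [DecidableEq n]

theorem adjoint_comp_toEuclideanCLM_gameMatrix (A : Matrix m n ℝ) :
    adjoint (toEuclideanCLM (𝕜 := ℝ) (gameMatrix A)) ∘L toEuclideanCLM (𝕜 := ℝ) (gameMatrix A)
      = toEuclideanCLM (𝕜 := ℝ) ((gameMatrix A)ᵀ * gameMatrix A) := by
  rw [← star_eq_adjoint, ← map_star, star_eq_conjTranspose, conjTranspose_eq_transpose_of_trivial,
    map_mul]
  rfl

end GameMatrix

section SigmaMin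

variable {d1 d2 : ℕ}

theorem sigmaMinSq_le {A : Matrix (Fin d1) (Fin d2) ℝ} {μ : ℝ} {v : Fin d2 → ℝ} (hv : v ≠ 0)
    (h : (Aᵀ * A) *ᵥ v = μ • v) (hμ : μ ≠ 0) : sigmaMinSq A ≤ μ :=
  csInf_le ⟨0, fun _ ⟨_, _, hw, hwt⟩ => nonneg_of_transpose_mul_self_mulVec_eq_smul hw hwt⟩
    ⟨hμ, v, hv, h⟩

theorem sigmaMinSq_le_of_mul_transpose {A : Matrix (Fin d1) (Fin d2) ℝ} {μ : ℝ} {v : Fin d1 → ℝ}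
    (hv : v ≠ 0) (h : (A * Aᵀ) *ᵥ v = μ • v) (hμ : μ ≠ 0) : sigmaMinSq A ≤ μ := by
  refine sigmaMinSq_le (v := Aᵀ *ᵥ v) (fun h0 => smul_ne_zero hμ hv ?_) ?_ hμ
  · rw [← h, ← mulVec_mulVec, h0, mulVec_zero]
  · rw [mulVec_mulVec, Matrix.mul_assoc, ← mulVec_mulVec, h, mulVec_smul]

theorem sigmaMinSq_le_of_gameMatrix {A : Matrix (Fin d1) (Fin d2) ℝ} {μ : ℝ}
    {w : Fin d1 ⊕ Fin d2 → ℝ} (hw : w ≠ 0) (h : ((gameMatrix A)ᵀ * gameMatrix A) *ᵥ w = μ • w)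
    (hμ : μ ≠ 0) : sigmaMinSq A ≤ μ := by
  rw [gameMatrix_transpose_mul_self, fromBlocks_mulVec] at h
  by_cases h0 : w ∘ Sum.inr = 0
  · refine sigmaMinSq_le_of_mul_transpose (v := w ∘ Sum.inl) (fun h1 => hw ?_) ?_ hμ
    · ext (a | j)
      exacts [congrFun h1 a, congrFun h0 j]
    · funext a
      simpa using congrFun h (Sum.inl a)
  · refine sigmaMinSq_le h0 ?_ hμ
    funext j
    simpa using congrFun h (Sum.inr j)

theorem sigmaMinSq_mul_norm_sq_le (A : Matrix (Fin d1) (Fin d2) ℝ)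
    {u : EuclideanSpace ℝ (Fin d1 ⊕ Fin d2)}
    (hu : u ∈ (toEuclideanCLM (𝕜 := ℝ) (gameMatrix A)).kerᗮ) :
    sigmaMinSq A * ‖u‖ ^ 2 ≤ ‖toEuclideanCLM (𝕜 := ℝ) (gameMatrix A) u‖ ^ 2 := by
  refine mul_norm_sq_le_norm_apply_sq_of_mem_orthogonal_ker _ (fun μ v hv h hμ => ?_) hu
  rw [adjoint_comp_toEuclideanCLM_gameMatrix] at h
  exact sigmaMinSq_le_of_gameMatrix (w := ofLp v) (by simpa using hv)
    (by simpa using congrArg ofLp h) hμ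

theorem xiBar_eq (A : Matrix (Fin d1) (Fin d2) ℝ) (b : Fin d1 → ℝ) (c : Fin d2 → ℝ)
    (x : EuclideanSpace ℝ (Fin d1 ⊕ Fin d2)) :
    xiBar A b c x = toEuclideanCLM (𝕜 := ℝ) (gameMatrix A) x + toLp 2 (Sum.elim b (-c)) := by
  ext (a | j) <;>
    simp [xiBar, gameMatrix, fromBlocks_mulVec, Function.comp_def, neg_mulVec, add_comm]

theorem Ham_nonneg (A : Matrix (Fin d1) (Fin d2) ℝ) (b : Fin d1 → ℝ) (c : Fin d2 → ℝ)
    (x : EuclideanSpace ℝ (Fin d1 ⊕ Fin d2)) : 0 ≤ Ham A b c x := by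
  unfold Ham
  positivity

theorem Ham_eq_zero_iff {A : Matrix (Fin d1) (Fin d2) ℝ} {b : Fin d1 → ℝ} {c : Fin d2 → ℝ}
    {x : EuclideanSpace ℝ (Fin d1 ⊕ Fin d2)} : Ham A b c x = 0 ↔ xiBar A b c x = 0 := by
  simp [Ham]

end SigmaMin

theorem bilinear_hamiltonian_quasi_strongly_convex_general
    {d1 d2 : ℕ}
    (Abar : Matrix (Fin d1) (Fin d2) ℝ) (bbar : Fin d1 → ℝ) (cbar : Fin d2 → ℝ)
    (Xstar : Set (EuclideanSpace ℝ (Fin d1 ⊕ Fin d2)))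
    (hXstar : Xstar = {x | xiBar Abar bbar cbar x = 0})
    (hne : Xstar.Nonempty) :
    (∀ x ∈ Xstar, Ham Abar bbar cbar x = 0) ∧
    (∀ x, 0 ≤ Ham Abar bbar cbar x) ∧
    (Xstar = {x | ∀ y, Ham Abar bbar cbar x ≤ Ham Abar bbar cbar y}) ∧
    (∀ x xbar : EuclideanSpace ℝ (Fin d1 ⊕ Fin d2), xbar ∈ Xstar →
      (∀ y ∈ Xstar, ‖x - xbar‖ ≤ ‖x - y‖) →
      Ham Abar bbar cbar x + ⟪gradient (Ham Abar bbar cbar) x, xbar - x⟫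
        + sigmaMinSq Abar / 2 * ‖xbar - x‖ ^ 2 ≤ 0) := by
  subst hXstar
  refine ⟨fun x hx => Ham_eq_zero_iff.2 hx, Ham_nonneg Abar bbar cbar, ?_, ?_⟩
  · obtain ⟨x₀, hx₀⟩ := hne
    simp_rw [← Ham_eq_zero_iff]
    exact setOf_eq_zero_eq_setOf_forall_le (Ham_nonneg Abar bbar cbar) ⟨x₀, Ham_eq_zero_iff.2 hx₀⟩
  · intro x xbar hxbar hproj
    set L := toEuclideanCLM (𝕜 := ℝ) (gameMatrix Abar)
    set y₀ : EuclideanSpace ℝ (Fin d1 ⊕ Fin d2) := toLp 2 (Sum.elim bbar (-cbar))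
    have hH : Ham Abar bbar cbar = fun x => 1 / 2 * ‖L x + y₀‖ ^ 2 := by
      funext x
      rw [Ham, xiBar_eq]
    simp only [Set.mem_ofPred_eq, xiBar_eq] at hxbar hproj
    rw [hH, (hasGradientAt_half_norm_sq_affine L y₀ x).gradient]
    exact half_norm_sq_affine_quasi_strongly_convex L y₀
      (fun u hu => sigmaMinSq_mul_norm_sq_le Abar hu) hxbar hproj

theorem bilinear_hamiltonian_quasi_strongly_convex
    {n d1 d2 : ℕ} (hn : 0 < n)
    (A : Fin n → Matrix (Fin d1) (Fin d2) ℝ) (b : Fin n → Fin d1 → ℝ)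
    (c : Fin n → Fin d2 → ℝ)
    (Abar : Matrix (Fin d1) (Fin d2) ℝ) (bbar : Fin d1 → ℝ) (cbar : Fin d2 → ℝ)
    (hA : Abar = (n : ℝ)⁻¹ • ∑ i, A i)
    (hb : bbar = (n : ℝ)⁻¹ • ∑ i, b i)
    (hc : cbar = (n : ℝ)⁻¹ • ∑ i, c i)
    (hAne : Abar ≠ 0)
    (Xstar : Set (EuclideanSpace ℝ (Fin d1 ⊕ Fin d2)))
    (hXstar : Xstar = {x | xiBar Abar bbar cbar x = 0})
    (hne : Xstar.Nonempty) :
    (∀ x ∈ Xstar, Ham Abar bbar cbar x = 0) ∧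
    (∀ x, 0 ≤ Ham Abar bbar cbar x) ∧
    (Xstar = {x | ∀ y, Ham Abar bbar cbar x ≤ Ham Abar bbar cbar y}) ∧
    (∀ x xbar : EuclideanSpace ℝ (Fin d1 ⊕ Fin d2), xbar ∈ Xstar →
      (∀ y ∈ Xstar, ‖x - xbar‖ ≤ ‖x - y‖) →
      Ham Abar bbar cbar x + ⟪gradient (Ham Abar bbar cbar) x, xbar - x⟫
        + sigmaMinSq Abar / 2 * ‖xbar - x‖ ^ 2 ≤ 0) :=
  bilinear_hamiltonian_quasi_strongly_convex_general Abar bbar cbar Xstar hXstar hne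

end
end

section
/- Let f = (1/N)∑_{m=1}^N f_m with each f_m : ℝ^d → ℝ differentiable. Suppose f is L-smooth, attains its minimum value f*, satisfies the Polyak–Łojasiewicz condition with constant μ > 0, and satisfies (1/N)∑_{m=1}^N ‖∇f_m(x) − ∇f_m(y) − (∇f(x) − ∇f(y))‖² ≤ ρ_nc ‖x − y‖² for all x, y ∈ ℝ^d and some ρ_nc > 0. Let p ∈ (0,1], let γ > 0 satisfy γ ≤ min{ 1/(4L), p^{2/3}/(36^{1/3}(Lρ_nc)^{1/3}), √p/√(6ρ_nc) }, and let K be a positive integer with K ≥ 4/(μγ). Consider the restarted L-SVRG method: given the outer iterate x^t, run K steps of L-SVRG with step size γ and probability p started at x⁰ = w⁰ = x^t (with fresh randomness), and let x^{t+1} be chosen uniformly at random from the K iterates x⁰, …, x^{K−1} of this run, independently of all other randomness. Then for every T ≥ 0, E[f(x^T) − f*] ≤ (1/2)^T (f(x⁰) − f*) and E‖∇f(x^T)‖² ≤ (1/2)^T ‖∇f(x⁰)‖². -/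
/-!
STATEMENT 13: Restarted L-SVRG on f = (1/N)∑f_m that is L-smooth, PL(μ), and satisfies
the second-moment residual bound with constant ρ_nc: with p ∈ (0,1],
γ ≤ min{1/(4L), p^{2/3}/(36^{1/3}(Lρ_nc)^{1/3}), √p/√(6ρ_nc)} and K ≥ 4/(μγ),
E[f(x^T) − f*] ≤ (1/2)^T (f(x⁰) − f*) and E‖∇f(x^T)‖² ≤ (1/2)^T ‖∇f(x⁰)‖².
-/

open scoped RealInnerProductSpace BigOperators

noncomputable section

variable {N d : ℕ}

/-- The average f = (1/N) ∑ₘ fₘ. -/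
def favg (f : Fin N → EuclideanSpace ℝ (Fin d) → ℝ) (x : EuclideanSpace ℝ (Fin d)) : ℝ :=
  (N : ℝ)⁻¹ * ∑ m, f m x

/-- One step of L-SVRG on the state (x, w): with index m and Bernoulli outcome θ,
x ↦ x − γ(∇f_m(x) − ∇f_m(w) + ∇f(w)), and w ↦ x if θ, w ↦ w otherwise. -/
def lsvrgStep (f : Fin N → EuclideanSpace ℝ (Fin d) → ℝ) (γ : ℝ) (m : Fin N) (θ : Bool)
    (s : EuclideanSpace ℝ (Fin d) × EuclideanSpace ℝ (Fin d)) :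
    EuclideanSpace ℝ (Fin d) × EuclideanSpace ℝ (Fin d) :=
  (s.1 - γ • (gradient (f m) s.1 - gradient (f m) s.2 + gradient (favg f) s.2),
   if θ then s.1 else s.2)

/-- `lsvrgExp f γ p k φ s` is the expectation E[φ(x^k, w^k) | (x⁰, w⁰) = s] for the
L-SVRG Markov chain with m_k i.i.d. uniform on {1,…,N} and θ_k i.i.d. Bernoulli(p). -/
def lsvrgExp (f : Fin N → EuclideanSpace ℝ (Fin d) → ℝ) (γ p : ℝ) :
    ℕ → (EuclideanSpace ℝ (Fin d) × EuclideanSpace ℝ (Fin d) → ℝ) →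
      EuclideanSpace ℝ (Fin d) × EuclideanSpace ℝ (Fin d) → ℝ
  | 0, φ => φ
  | k + 1, φ => fun s => (N : ℝ)⁻¹ * ∑ m,
      (p * lsvrgExp f γ p k φ (lsvrgStep f γ m true s)
        + (1 - p) * lsvrgExp f γ p k φ (lsvrgStep f γ m false s))

/-- `restartExp f γ p K T φ y` is the expectation E[φ(x^T) | outer start y] for the
restarted method: each outer step runs K inner L-SVRG steps started at (y, y) with
fresh randomness and outputs one of the K inner iterates x⁰, …, x^{K−1} chosen
uniformly at random, independently of everything else. -/
def restartExp (f : Fin N → EuclideanSpace ℝ (Fin d) → ℝ) (γ p : ℝ) (K : ℕ) :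
    ℕ → (EuclideanSpace ℝ (Fin d) → ℝ) → EuclideanSpace ℝ (Fin d) → ℝ
  | 0, φ => φ
  | T + 1, φ => fun y => (K : ℝ)⁻¹ * ∑ u ∈ Finset.range K,
      lsvrgExp f γ p u (fun s => restartExp f γ p K T φ s.1) (y, y)

/-!
The function `Φ(x, w) = f(x) - f* + c‖x - w‖²` with `c = 3Lρ_ncγ²/(2p)` is a Lyapunov function for
L-SVRG: by the descent lemma, the bound `E‖gᵏ‖² ≤ ‖∇f(xᵏ)‖² + ρ_nc‖xᵏ - wᵏ‖²` and Young's
inequality, one step decreases its expectation by at least `(γ/2)‖∇f(xᵏ)‖²`. A run restarted at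
`(y, y)` starts from `Φ = f(y) - f*`, so telescoping gives that the average of `E‖∇f‖²` over its
first `K` iterates is at most `2(f(y) - f*)/(γK) ≤ (μ/2)(f(y) - f*)`. The PL inequality turns this
into a contraction by `1/4` of both `f - f*` and `‖∇f‖²` per restart.
-/

local notation:max "ℝ^" n:max => EuclideanSpace ℝ (Fin n)

section

variable {E : Type*} [NormedAddCommGroup E] [InnerProductSpace ℝ E]

theorem image_add_le_of_lipschitz_gradient [CompleteSpace E] {F : E → ℝ}
    (hF : Differentiable ℝ F) {L : ℝ} (hsmooth : ∀ x y, ‖gradient F x - gradient F y‖ ≤ L * ‖x - y‖)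
    (x v : E) : F (x + v) ≤ F x + ⟪gradient F x, v⟫ + L / 2 * ‖v‖ ^ 2 := by
  set h : ℝ → ℝ := fun t => F (x + t • v) - t * ⟪gradient F x, v⟫ - L / 2 * t ^ 2 * ‖v‖ ^ 2
  have hderiv : ∀ t, HasDerivAt h
      (⟪gradient F (x + t • v), v⟫ - ⟪gradient F x, v⟫ - L * t * ‖v‖ ^ 2) t := by
    intro t
    have hline : HasDerivAt (fun t : ℝ => x + t • v) v t := by
      simpa using ((hasDerivAt_id t).smul_const v).const_add x
    have hF' := (hF (x + t • v)).hasGradientAt.hasFDerivAt.comp_hasDerivAt t hline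
    refine ((hF'.sub ((hasDerivAt_id t).mul_const ⟪gradient F x, v⟫)).sub
      (((hasDerivAt_pow 2 t).const_mul (L / 2)).mul_const (‖v‖ ^ 2))).congr_deriv ?_
    simp only [InnerProductSpace.toDual_apply_apply]
    ring
  have hanti : AntitoneOn h (Set.Ici 0) := by
    refine antitoneOn_of_hasDerivWithinAt_nonpos (convex_Ici 0)
      (fun t _ => (hderiv t).continuousAt.continuousWithinAt)
      (fun t _ => (hderiv t).hasDerivWithinAt) fun t ht => ?_
    rw [interior_Ici, Set.mem_Ioi] at ht
    have hcs : ⟪gradient F (x + t • v) - gradient F x, v⟫ ≤ L * t * ‖v‖ ^ 2 :=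
      calc ⟪gradient F (x + t • v) - gradient F x, v⟫
          ≤ ‖gradient F (x + t • v) - gradient F x‖ * ‖v‖ := real_inner_le_norm _ _
        _ ≤ L * ‖t • v‖ * ‖v‖ := by
            gcongr
            simpa using hsmooth (x + t • v) x
        _ = L * t * ‖v‖ ^ 2 := by rw [norm_smul, Real.norm_of_nonneg ht.le]; ring
    rw [inner_sub_left] at hcs
    linarith
  have h01 := hanti (Set.mem_Ici.2 le_rfl) (Set.mem_Ici.2 zero_le_one) zero_le_one
  simp only [h, one_smul, zero_smul, add_zero] at h01
  linarith

theorem sum_norm_sq_eq_of_sum_eq {ι : Type*} [Fintype ι] (v : ι → E) (a : E)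
    (h : ∑ i, v i = (Fintype.card ι : ℝ) • a) :
    ∑ i, ‖v i‖ ^ 2 = Fintype.card ι * ‖a‖ ^ 2 + ∑ i, ‖v i - a‖ ^ 2 := by
  have hcross : ∑ i, ⟪a, v i - a⟫ = 0 := by
    simp [← inner_sum, Finset.sum_sub_distrib, h, Nat.cast_smul_eq_nsmul]
  have hsplit : ∀ i, ‖v i‖ ^ 2 = ‖a‖ ^ 2 + 2 * ⟪a, v i - a⟫ + ‖v i - a‖ ^ 2 := fun i => by
    simpa using norm_add_sq_real a (v i - a)
  simp only [hsplit, Finset.sum_add_distrib, ← Finset.mul_sum, hcross, Finset.sum_const,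
    Finset.card_univ, nsmul_eq_mul]
  ring

theorem neg_two_mul_inner_le {p : ℝ} (hp : 0 < p) (γ : ℝ) (u v : E) :
    -(2 * γ * ⟪u, v⟫) ≤ p / 2 * ‖v‖ ^ 2 + 2 * γ ^ 2 / p * ‖u‖ ^ 2 := by
  have hcs : -(2 * γ * ⟪u, v⟫) ≤ 2 * |γ| * (‖u‖ * ‖v‖) := by
    have h := neg_abs_le (2 * γ * ⟪u, v⟫)
    rw [abs_mul, abs_mul, abs_two] at h
    nlinarith [abs_real_inner_le_norm u v, abs_nonneg γ]
  have hsq : p / 2 * ‖v‖ ^ 2 + 2 * γ ^ 2 / p * ‖u‖ ^ 2 - 2 * |γ| * (‖u‖ * ‖v‖)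
      = (p * ‖v‖ - 2 * |γ| * ‖u‖) ^ 2 / (2 * p) := by
    rw [← sq_abs γ]
    field_simp
    ring
  have : 0 ≤ (p * ‖v‖ - 2 * |γ| * ‖u‖) ^ 2 / (2 * p) := by positivity
  linarith

theorem lyapunov_term_le [CompleteSpace E] {F : E → ℝ} (hF : Differentiable ℝ F) {L : ℝ}
    (hsmooth : ∀ x y, ‖gradient F x - gradient F y‖ ≤ L * ‖x - y‖) (fstar p γ c : ℝ)
    (x w g : E) :
    p * (F (x - γ • g) - fstar + c * ‖x - γ • g - x‖ ^ 2)
        + (1 - p) * (F (x - γ • g) - fstar + c * ‖x - γ • g - w‖ ^ 2)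
      ≤ F x - fstar + c * (1 - p) * ‖x - w‖ ^ 2 - γ * ⟪gradient F x, g⟫
        + (L / 2 + c) * γ ^ 2 * ‖g‖ ^ 2 - 2 * c * (1 - p) * γ * ⟪g, x - w⟫ := by
  have hdescent := image_add_le_of_lipschitz_gradient hF hsmooth x (-(γ • g))
  rw [← sub_eq_add_neg, inner_neg_right, real_inner_smul_right, norm_neg, norm_smul,
    Real.norm_eq_abs, mul_pow, sq_abs] at hdescent
  have hx : ‖x - γ • g - x‖ ^ 2 = γ ^ 2 * ‖g‖ ^ 2 := by
    rw [sub_sub_cancel_left, norm_neg, norm_smul, Real.norm_eq_abs, mul_pow, sq_abs]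
  have hw : ‖x - γ • g - w‖ ^ 2 = ‖x - w‖ ^ 2 - 2 * γ * ⟪g, x - w⟫ + γ ^ 2 * ‖g‖ ^ 2 := by
    rw [sub_right_comm, norm_sub_sq_real, real_inner_smul_right, norm_smul, Real.norm_eq_abs,
      mul_pow, sq_abs, real_inner_comm]
    ring
  rw [hx, hw]
  linarith

theorem lyapunov_step_le [CompleteSpace E] {F : E → ℝ} (hF : Differentiable ℝ F) {L : ℝ}
    (hL : 0 ≤ L) (hsmooth : ∀ x y, ‖gradient F x - gradient F y‖ ≤ L * ‖x - y‖)
    {ρ p γ c : ℝ} (hp0 : 0 < p) (hp1 : p ≤ 1) (hc : 0 ≤ c)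
    (hcG : (L / 2 + c) * γ ^ 2 + c * (1 - p) * (2 * γ ^ 2 / p) ≤ γ / 2)
    (hcD : (L / 2 + c) * γ ^ 2 * ρ + c * (1 - p) * (1 + p / 2) ≤ c) (fstar : ℝ)
    {N : ℕ} (hN : 0 < N) (x w : E) (g : Fin N → E)
    (hmean : ∑ m, g m = (N : ℝ) • gradient F x)
    (hvar : (N : ℝ)⁻¹ * ∑ m, ‖g m - gradient F x‖ ^ 2 ≤ ρ * ‖x - w‖ ^ 2) :
    (N : ℝ)⁻¹ * ∑ m, (p * (F (x - γ • g m) - fstar + c * ‖x - γ • g m - x‖ ^ 2)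
        + (1 - p) * (F (x - γ • g m) - fstar + c * ‖x - γ • g m - w‖ ^ 2))
      ≤ F x - fstar + c * ‖x - w‖ ^ 2 - γ / 2 * ‖gradient F x‖ ^ 2 := by
  set G := gradient F x
  have hN' : (0 : ℝ) < N := Nat.cast_pos.2 hN
  have hsecond : (N : ℝ)⁻¹ * ∑ m, ‖g m‖ ^ 2 ≤ ‖G‖ ^ 2 + ρ * ‖x - w‖ ^ 2 := by
    rw [sum_norm_sq_eq_of_sum_eq g G (by simpa using hmean), Fintype.card_fin, mul_add,
      inv_mul_cancel_left₀ hN'.ne']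
    linarith
  have hyoung := neg_two_mul_inner_le hp0 γ G (x - w)
  have hterms := mul_le_mul_of_nonneg_left (Finset.sum_le_sum fun m (_ : m ∈ Finset.univ) =>
    lyapunov_term_le hF hsmooth fstar p γ c x w (g m)) (inv_nonneg.2 hN'.le)
  have havg : (N : ℝ)⁻¹ * ∑ m, (F x - fstar + c * (1 - p) * ‖x - w‖ ^ 2 - γ * ⟪G, g m⟫
        + (L / 2 + c) * γ ^ 2 * ‖g m‖ ^ 2 - 2 * c * (1 - p) * γ * ⟪g m, x - w⟫)
      = F x - fstar + c * (1 - p) * ‖x - w‖ ^ 2 - γ * ‖G‖ ^ 2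
        + (L / 2 + c) * γ ^ 2 * ((N : ℝ)⁻¹ * ∑ m, ‖g m‖ ^ 2)
        - 2 * c * (1 - p) * γ * ⟪G, x - w⟫ := by
    simp only [Finset.sum_add_distrib, Finset.sum_sub_distrib, ← Finset.mul_sum, ← inner_sum,
      ← sum_inner, hmean, Finset.sum_const, Finset.card_univ, Fintype.card_fin, nsmul_eq_mul,
      real_inner_smul_left, real_inner_smul_right, real_inner_self_eq_norm_sq]
    field_simp
  rw [havg] at hterms
  have h1 := mul_le_mul_of_nonneg_left hsecond (by positivity : 0 ≤ (L / 2 + c) * γ ^ 2)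
  have h2 := mul_le_mul_of_nonneg_left hyoung (mul_nonneg hc (sub_nonneg.2 hp1))
  have h3 := mul_le_mul_of_nonneg_right hcG (sq_nonneg ‖G‖)
  have h4 := mul_le_mul_of_nonneg_right hcD (sq_nonneg ‖x - w‖)
  linarith

end

theorem lyapunov_gradient_coeff_le {L ρ p γ c : ℝ} (hL : 0 ≤ L) (hρ : 0 ≤ ρ) (hp0 : 0 < p)
    (hγ : 0 < γ) (h4L : 4 * L * γ ≤ 1) (h36 : 36 * L * ρ * γ ^ 3 ≤ p ^ 2)
    (hc : c = 3 * L * ρ * γ ^ 2 / (2 * p)) :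
    (L / 2 + c) * γ ^ 2 + c * (1 - p) * (2 * γ ^ 2 / p) ≤ γ / 2 := by
  subst hc
  have h1 := mul_le_mul_of_nonneg_right h4L (by positivity : 0 ≤ γ * p ^ 2)
  have h2 := mul_le_mul_of_nonneg_right h36 (by positivity : 0 ≤ γ)
  have h3 : 0 ≤ L * ρ * γ ^ 4 * p := by positivity
  rw [← sub_nonneg]
  have key : γ / 2 - ((L / 2 + 3 * L * ρ * γ ^ 2 / (2 * p)) * γ ^ 2
      + 3 * L * ρ * γ ^ 2 / (2 * p) * (1 - p) * (2 * γ ^ 2 / p))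
      = (γ * p ^ 2 - L * γ ^ 2 * p ^ 2 - 6 * L * ρ * γ ^ 4 + 3 * L * ρ * γ ^ 4 * p) / (2 * p ^ 2) := by
    field_simp
    ring
  rw [key]
  apply div_nonneg _ (by positivity)
  nlinarith

theorem lyapunov_distance_coeff_le {L ρ p γ c : ℝ} (hL : 0 ≤ L) (hρ : 0 ≤ ρ) (hp0 : 0 < p)
    (h6 : 6 * ρ * γ ^ 2 ≤ p) (hc : c = 3 * L * ρ * γ ^ 2 / (2 * p)) :
    (L / 2 + c) * γ ^ 2 * ρ + c * (1 - p) * (1 + p / 2) ≤ c := by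
  subst hc
  have h1 := mul_le_mul_of_nonneg_right h6 (by positivity : 0 ≤ L * ρ * γ ^ 2)
  have h2 : 0 ≤ L * ρ * γ ^ 2 * p ^ 2 := by positivity
  rw [← sub_nonneg]
  have key : 3 * L * ρ * γ ^ 2 / (2 * p) - ((L / 2 + 3 * L * ρ * γ ^ 2 / (2 * p)) * γ ^ 2 * ρ
      + 3 * L * ρ * γ ^ 2 / (2 * p) * (1 - p) * (1 + p / 2))
      = (L * ρ * γ ^ 2 * p - 6 * L * ρ ^ 2 * γ ^ 4 + 3 * L * ρ * γ ^ 2 * p ^ 2) / (4 * p) := by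
    field_simp
    ring
  rw [key]
  apply div_nonneg _ (by positivity)
  nlinarith

theorem lsvrg_stepsize_bounds {L ρ p γ : ℝ} (hL : 0 < L) (hρ : 0 < ρ) (hp : 0 < p) (hγ0 : 0 < γ)
    (hγ : γ ≤ min (1 / (4 * L))
      (min (p ^ ((2 : ℝ) / 3) / ((36 : ℝ) ^ ((1 : ℝ) / 3) * (L * ρ) ^ ((1 : ℝ) / 3)))
        (Real.sqrt p / Real.sqrt (6 * ρ)))) :
    4 * L * γ ≤ 1 ∧ 36 * L * ρ * γ ^ 3 ≤ p ^ 2 ∧ 6 * ρ * γ ^ 2 ≤ p := by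
  simp only [le_min_iff] at hγ
  obtain ⟨h4L, h36, h6⟩ := hγ
  refine ⟨by rwa [le_div_iff₀ (by positivity), mul_comm] at h4L, ?_, ?_⟩
  · have hcube := pow_le_pow_left₀ hγ0.le h36 3
    rw [div_pow, mul_pow, ← Real.rpow_natCast (p ^ _), ← Real.rpow_natCast ((36 : ℝ) ^ _),
      ← Real.rpow_natCast ((L * ρ) ^ _), ← Real.rpow_mul hp.le, ← Real.rpow_mul (by norm_num),
      ← Real.rpow_mul (by positivity), le_div_iff₀ (by positivity)] at hcube
    norm_num at hcube
    linarith
  · have hsq := pow_le_pow_left₀ hγ0.le h6 2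
    rw [div_pow, Real.sq_sqrt hp.le, Real.sq_sqrt (by positivity), le_div_iff₀ (by positivity)]
      at hsq
    linarith

variable {f : Fin N → ℝ^d → ℝ} {γ p : ℝ}

theorem hasGradientAt_favg (hdiff : ∀ m, Differentiable ℝ (f m)) (x : ℝ^d) :
    HasGradientAt (favg f) ((N : ℝ)⁻¹ • ∑ m, gradient (f m) x) x := by
  have h := (HasFDerivAt.fun_sum (u := Finset.univ) fun m _ =>
    (hdiff m x).hasGradientAt.hasFDerivAt).const_smul (N : ℝ)⁻¹
  rw [hasGradientAt_iff_hasFDerivAt, map_smul, map_sum]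
  exact h

theorem sum_gradient_eq_smul_gradient_favg (hN : 0 < N) (hdiff : ∀ m, Differentiable ℝ (f m))
    (x : ℝ^d) :
    ∑ m, gradient (f m) x = (N : ℝ) • gradient (favg f) x := by
  rw [(hasGradientAt_favg hdiff x).gradient, smul_smul,
    mul_inv_cancel₀ (Nat.cast_ne_zero.2 hN.ne'), one_smul]

theorem lsvrgExp_mono (hp0 : 0 ≤ p) (hp1 : p ≤ 1) {φ ψ : ℝ^d × ℝ^d → ℝ} (h : ∀ s, φ s ≤ ψ s) :
    ∀ k s, lsvrgExp f γ p k φ s ≤ lsvrgExp f γ p k ψ s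
  | 0, s => h s
  | k + 1, s => by
    have h1p : 0 ≤ 1 - p := sub_nonneg.2 hp1
    refine mul_le_mul_of_nonneg_left (Finset.sum_le_sum fun m _ => ?_) (by positivity)
    gcongr <;> exact lsvrgExp_mono hp0 hp1 h k _

theorem lsvrgExp_nonneg (hp0 : 0 ≤ p) (hp1 : p ≤ 1) {φ : ℝ^d × ℝ^d → ℝ} (h : ∀ s, 0 ≤ φ s) :
    ∀ k s, 0 ≤ lsvrgExp f γ p k φ s
  | 0, s => h s
  | k + 1, s => by
    have h1p : 0 ≤ 1 - p := sub_nonneg.2 hp1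
    have := lsvrgExp_nonneg hp0 hp1 h k
    exact mul_nonneg (by positivity) (Finset.sum_nonneg fun m _ =>
      add_nonneg (mul_nonneg hp0 (this _)) (mul_nonneg h1p (this _)))

theorem lsvrgExp_const_mul (a : ℝ) (φ : ℝ^d × ℝ^d → ℝ) :
    ∀ k s, lsvrgExp f γ p k (fun s => a * φ s) s = a * lsvrgExp f γ p k φ s
  | 0, _ => rfl
  | k + 1, s => by
    simp only [lsvrgExp, lsvrgExp_const_mul a φ k, Finset.mul_sum]
    exact Finset.sum_congr rfl fun _ _ => by ring

theorem lsvrgExp_sub (φ ψ : ℝ^d × ℝ^d → ℝ) :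
    ∀ k s, lsvrgExp f γ p k (fun s => φ s - ψ s) s = lsvrgExp f γ p k φ s - lsvrgExp f γ p k ψ s
  | 0, _ => rfl
  | k + 1, s => by
    simp only [lsvrgExp, lsvrgExp_sub φ ψ k, ← mul_sub, ← Finset.sum_sub_distrib]
    exact congrArg _ (Finset.sum_congr rfl fun _ _ => by ring)

theorem lsvrgExp_add (φ : ℝ^d × ℝ^d → ℝ) :
    ∀ k j, lsvrgExp f γ p (k + j) φ = lsvrgExp f γ p k (lsvrgExp f γ p j φ)
  | 0, j => by rw [zero_add]; rfl
  | k + 1, j => by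
    rw [Nat.add_right_comm]
    funext s
    simp only [lsvrgExp, lsvrgExp_add φ k j]

theorem sum_lsvrgExp_le_of_lyapunov (hp0 : 0 ≤ p) (hp1 : p ≤ 1) {Φ ψ : ℝ^d × ℝ^d → ℝ}
    (hΦ : ∀ s, 0 ≤ Φ s) (hstep : ∀ s, lsvrgExp f γ p 1 Φ s ≤ Φ s - ψ s) (K : ℕ) (s : ℝ^d × ℝ^d) :
    ∑ u ∈ Finset.range K, lsvrgExp f γ p u ψ s ≤ Φ s := by
  suffices h : ∀ K s, ∑ u ∈ Finset.range K, lsvrgExp f γ p u ψ s ≤ Φ s - lsvrgExp f γ p K Φ s by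
    linarith [h K s, lsvrgExp_nonneg (f := f) (γ := γ) hp0 hp1 hΦ K s]
  intro K
  induction K with
  | zero => simp [lsvrgExp]
  | succ K ih =>
    intro s
    have hdecay : lsvrgExp f γ p (K + 1) Φ s ≤ lsvrgExp f γ p K Φ s - lsvrgExp f γ p K ψ s := by
      rw [lsvrgExp_add, ← lsvrgExp_sub]
      exact lsvrgExp_mono hp0 hp1 hstep K s
    rw [Finset.sum_range_succ]
    linarith [ih s]

theorem lsvrgExp_one_lyapunov_le (hN : 0 < N) (hdiff : ∀ m, Differentiable ℝ (f m))
    {L ρ c : ℝ} (hL : 0 ≤ L)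
    (hsmooth : ∀ x y, ‖gradient (favg f) x - gradient (favg f) y‖ ≤ L * ‖x - y‖)
    (hres : ∀ x y, (N : ℝ)⁻¹ * ∑ m,
        ‖gradient (f m) x - gradient (f m) y - (gradient (favg f) x - gradient (favg f) y)‖ ^ 2
      ≤ ρ * ‖x - y‖ ^ 2)
    (hp0 : 0 < p) (hp1 : p ≤ 1) (hc : 0 ≤ c)
    (hcG : (L / 2 + c) * γ ^ 2 + c * (1 - p) * (2 * γ ^ 2 / p) ≤ γ / 2)
    (hcD : (L / 2 + c) * γ ^ 2 * ρ + c * (1 - p) * (1 + p / 2) ≤ c) (fstar : ℝ) (s : ℝ^d × ℝ^d) :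
    lsvrgExp f γ p 1 (fun s => favg f s.1 - fstar + c * ‖s.1 - s.2‖ ^ 2) s
      ≤ favg f s.1 - fstar + c * ‖s.1 - s.2‖ ^ 2 - γ / 2 * ‖gradient (favg f) s.1‖ ^ 2 := by
  obtain ⟨x, w⟩ := s
  have hdiff_favg : Differentiable ℝ (favg f) := fun x =>
    (hasGradientAt_favg hdiff x).differentiableAt
  set g := fun m => gradient (f m) x - gradient (f m) w + gradient (favg f) w
  have hmean : ∑ m, g m = (N : ℝ) • gradient (favg f) x := by
    simp only [g, Finset.sum_add_distrib, Finset.sum_sub_distrib,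
      sum_gradient_eq_smul_gradient_favg hN hdiff, Finset.sum_const, Finset.card_univ,
      Fintype.card_fin, ← Nat.cast_smul_eq_nsmul ℝ, sub_add_cancel]
  have hvar : (N : ℝ)⁻¹ * ∑ m, ‖g m - gradient (favg f) x‖ ^ 2 ≤ ρ * ‖x - w‖ ^ 2 := by
    convert hres x w using 5
    simp only [g]
    abel
  exact lyapunov_step_le hdiff_favg hL hsmooth hp0 hp1 hc hcG hcD fstar hN x w g hmean hvar

def restartStep (f : Fin N → ℝ^d → ℝ) (γ p : ℝ) (K : ℕ) (φ : ℝ^d → ℝ) (y : ℝ^d) : ℝ :=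
  (K : ℝ)⁻¹ * ∑ u ∈ Finset.range K, lsvrgExp f γ p u (fun s => φ s.1) (y, y)

theorem restartExp_succ (K T : ℕ) (φ : ℝ^d → ℝ) :
    restartExp f γ p K (T + 1) φ = restartStep f γ p K (restartExp f γ p K T φ) :=
  rfl

theorem restartStep_mono (hp0 : 0 ≤ p) (hp1 : p ≤ 1) (K : ℕ) {φ ψ : ℝ^d → ℝ}
    (h : ∀ y, φ y ≤ ψ y) (y : ℝ^d) : restartStep f γ p K φ y ≤ restartStep f γ p K ψ y :=
  mul_le_mul_of_nonneg_left
    (Finset.sum_le_sum fun u _ => lsvrgExp_mono hp0 hp1 (fun s => h s.1) u _) (by positivity)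

theorem restartStep_const_mul (K : ℕ) (a : ℝ) (φ : ℝ^d → ℝ) (y : ℝ^d) :
    restartStep f γ p K (fun y => a * φ y) y = a * restartStep f γ p K φ y := by
  simp only [restartStep, lsvrgExp_const_mul a (fun s => φ s.1), ← Finset.mul_sum]
  ring

theorem restartStep_le_of_sum_le (hp0 : 0 ≤ p) (hp1 : p ≤ 1) {μ : ℝ} (hμ : 0 < μ) (hγ : 0 < γ)
    {K : ℕ} (hK : 4 / (μ * γ) ≤ K) {φ : ℝ^d → ℝ} (hφ : ∀ y, 0 ≤ φ y) {V : ℝ} (y : ℝ^d)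
    (hsum : γ / 2 * ∑ u ∈ Finset.range K, lsvrgExp f γ p u (fun s => φ s.1) (y, y) ≤ V) :
    restartStep f γ p K φ y ≤ μ / 2 * V := by
  have hS := Finset.sum_nonneg fun u (_ : u ∈ Finset.range K) =>
    lsvrgExp_nonneg (f := f) (γ := γ) hp0 hp1 (fun s => hφ s.1) u (y, y)
  have hKinv : (K : ℝ)⁻¹ ≤ μ * γ / 4 := by simpa using inv_anti₀ (by positivity) hK
  calc (K : ℝ)⁻¹ * _ ≤ μ * γ / 4 * _ := mul_le_mul_of_nonneg_right hKinv hS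
    _ = μ / 2 * (γ / 2 * _) := by ring
    _ ≤ μ / 2 * V := mul_le_mul_of_nonneg_left hsum (by positivity)

theorem restartStep_le_half_of_PL (hp0 : 0 ≤ p) (hp1 : p ≤ 1) (K : ℕ) {μ : ℝ} (hμ : 0 < μ)
    {V W : ℝ^d → ℝ} (hV : ∀ y, 0 ≤ V y) (hPL : ∀ y, μ * V y ≤ 1 / 2 * W y)
    (hW : ∀ y, restartStep f γ p K W y ≤ μ / 2 * V y) :
    (∀ y, restartStep f γ p K V y ≤ 1 / 2 * V y) ∧
      ∀ y, restartStep f γ p K W y ≤ 1 / 2 * W y := by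
  have hPL' : ∀ y, V y ≤ 1 / (2 * μ) * W y := fun y => by
    rw [div_mul_eq_mul_div, le_div_iff₀ (by positivity)]
    linarith [hPL y]
  refine ⟨fun y => ?_, fun y => ?_⟩
  · calc _ ≤ restartStep f γ p K (fun y => 1 / (2 * μ) * W y) y :=
          restartStep_mono hp0 hp1 K hPL' y
      _ = 1 / (2 * μ) * restartStep f γ p K W y := restartStep_const_mul K _ W y
      _ ≤ 1 / (2 * μ) * (μ / 2 * V y) := mul_le_mul_of_nonneg_left (hW y) (by positivity)
      _ ≤ 1 / 2 * V y := by
          field_simp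
          linarith [hV y]
  · calc _ ≤ μ / 2 * V y := hW y
      _ ≤ μ / 2 * (1 / (2 * μ) * W y) := mul_le_mul_of_nonneg_left (hPL' y) (by positivity)
      _ ≤ 1 / 2 * W y := by
          field_simp
          linarith [hPL y, mul_nonneg hμ.le (hV y)]

theorem restartExp_le_pow_mul (hp0 : 0 ≤ p) (hp1 : p ≤ 1) (K : ℕ) {V : ℝ^d → ℝ} {q : ℝ}
    (hq : 0 ≤ q) (hV : ∀ y, restartStep f γ p K V y ≤ q * V y) :
    ∀ T y, restartExp f γ p K T V y ≤ q ^ T * V y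
  | 0, y => by simp [restartExp]
  | T + 1, y =>
    calc restartExp f γ p K (T + 1) V y
        = restartStep f γ p K (restartExp f γ p K T V) y := by rw [restartExp_succ]
      _ ≤ restartStep f γ p K (fun y => q ^ T * V y) y :=
          restartStep_mono hp0 hp1 K (restartExp_le_pow_mul hp0 hp1 K hq hV T) y
      _ = q ^ T * restartStep f γ p K V y := restartStep_const_mul K _ V y
      _ ≤ q ^ (T + 1) * V y := by
          rw [pow_succ, mul_assoc]
          exact mul_le_mul_of_nonneg_left (hV y) (by positivity)

theorem restarted_lsvrg_linear_convergence_PL_general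
    (hN : 0 < N) (f : Fin N → EuclideanSpace ℝ (Fin d) → ℝ)
    (hdiff : ∀ m, Differentiable ℝ (f m))
    (L : ℝ) (hL : 0 < L)
    (hsmooth : ∀ x y, ‖gradient (favg f) x - gradient (favg f) y‖ ≤ L * ‖x - y‖)
    (fstar : ℝ) (hmin : ∃ xm, favg f xm = fstar ∧ ∀ y, fstar ≤ favg f y)
    (μ : ℝ) (hμ : 0 < μ)
    (hPL : ∀ x, μ * (favg f x - fstar) ≤ (1 / 2 : ℝ) * ‖gradient (favg f) x‖ ^ 2)
    (ρnc : ℝ) (hρnc : 0 < ρnc)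
    (hres : ∀ x y, (N : ℝ)⁻¹ * ∑ m,
        ‖gradient (f m) x - gradient (f m) y
          - (gradient (favg f) x - gradient (favg f) y)‖ ^ 2
      ≤ ρnc * ‖x - y‖ ^ 2)
    (p : ℝ) (hp0 : 0 < p) (hp1 : p ≤ 1)
    (γ : ℝ) (hγ0 : 0 < γ)
    (hγ : γ ≤ min (1 / (4 * L))
      (min (p ^ ((2 : ℝ) / 3) / ((36 : ℝ) ^ ((1 : ℝ) / 3) * (L * ρnc) ^ ((1 : ℝ) / 3)))
        (Real.sqrt p / Real.sqrt (6 * ρnc))))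
    (K : ℕ) (hK : (4 : ℝ) / (μ * γ) ≤ K)
    (x0 : EuclideanSpace ℝ (Fin d)) :
    ∀ T : ℕ,
      restartExp f γ p K T (fun y => favg f y - fstar) x0
          ≤ (1 / 2 : ℝ) ^ T * (favg f x0 - fstar) ∧
      restartExp f γ p K T (fun y => ‖gradient (favg f) y‖ ^ 2) x0
          ≤ (1 / 2 : ℝ) ^ T * ‖gradient (favg f) x0‖ ^ 2 := by
  obtain ⟨-, -, hfstar⟩ := hmin
  obtain ⟨h4L, h36, h6⟩ := lsvrg_stepsize_bounds hL hρnc hp0 hγ0 hγ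
  set c := 3 * L * ρnc * γ ^ 2 / (2 * p) with hc
  have hlyap := lsvrgExp_one_lyapunov_le hN hdiff hL.le hsmooth hres hp0 hp1 (by positivity)
    (lyapunov_gradient_coeff_le hL.le hρnc.le hp0 hγ0 h4L h36 hc)
    (lyapunov_distance_coeff_le hL.le hρnc.le hp0 h6 hc) fstar
  have hrun : ∀ y, γ / 2 * ∑ u ∈ Finset.range K,
      lsvrgExp f γ p u (fun s => ‖gradient (favg f) s.1‖ ^ 2) (y, y) ≤ favg f y - fstar := by
    intro y
    have h := sum_lsvrgExp_le_of_lyapunov hp0.le hp1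
      (fun s => add_nonneg (sub_nonneg.2 (hfstar s.1)) (by positivity)) hlyap K (y, y)
    simpa [Finset.mul_sum, lsvrgExp_const_mul] using h
  have hgrad : ∀ y, restartStep f γ p K (fun y => ‖gradient (favg f) y‖ ^ 2) y
      ≤ μ / 2 * (favg f y - fstar) := fun y =>
    restartStep_le_of_sum_le hp0.le hp1 hμ hγ0 hK (fun _ => sq_nonneg _) y (hrun y)
  obtain ⟨hval, hgrad'⟩ := restartStep_le_half_of_PL hp0.le hp1 K hμ
    (fun y => sub_nonneg.2 (hfstar y)) hPL hgrad
  exact fun T => ⟨restartExp_le_pow_mul hp0.le hp1 K (by norm_num) hval T x0,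
    restartExp_le_pow_mul hp0.le hp1 K (by norm_num) hgrad' T x0⟩

theorem restarted_lsvrg_linear_convergence_PL
    (hN : 0 < N) (f : Fin N → EuclideanSpace ℝ (Fin d) → ℝ)
    (hdiff : ∀ m, Differentiable ℝ (f m))
    (L : ℝ) (hL : 0 < L)
    (hsmooth : ∀ x y, ‖gradient (favg f) x - gradient (favg f) y‖ ≤ L * ‖x - y‖)
    (fstar : ℝ) (hmin : ∃ xm, favg f xm = fstar ∧ ∀ y, fstar ≤ favg f y)
    (μ : ℝ) (hμ : 0 < μ)
    (hPL : ∀ x, μ * (favg f x - fstar) ≤ (1 / 2 : ℝ) * ‖gradient (favg f) x‖ ^ 2)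
    (ρnc : ℝ) (hρnc : 0 < ρnc)
    (hres : ∀ x y, (N : ℝ)⁻¹ * ∑ m,
        ‖gradient (f m) x - gradient (f m) y
          - (gradient (favg f) x - gradient (favg f) y)‖ ^ 2
      ≤ ρnc * ‖x - y‖ ^ 2)
    (p : ℝ) (hp0 : 0 < p) (hp1 : p ≤ 1)
    (γ : ℝ) (hγ0 : 0 < γ)
    (hγ : γ ≤ min (1 / (4 * L))
      (min (p ^ ((2 : ℝ) / 3) / ((36 : ℝ) ^ ((1 : ℝ) / 3) * (L * ρnc) ^ ((1 : ℝ) / 3)))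
        (Real.sqrt p / Real.sqrt (6 * ρnc))))
    (K : ℕ) (hK0 : 0 < K) (hK : (4 : ℝ) / (μ * γ) ≤ K)
    (x0 : EuclideanSpace ℝ (Fin d)) :
    ∀ T : ℕ,
      restartExp f γ p K T (fun y => favg f y - fstar) x0
          ≤ (1 / 2 : ℝ) ^ T * (favg f x0 - fstar) ∧
      restartExp f γ p K T (fun y => ‖gradient (favg f) y‖ ^ 2) x0
          ≤ (1 / 2 : ℝ) ^ T * ‖gradient (favg f) x0‖ ^ 2 :=
  restarted_lsvrg_linear_convergence_PL_general hN f hdiff L hL hsmooth fstar hmin μ hμ hPL ρnc hρnc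
    hres p hp0 hp1 γ hγ0 hγ K hK x0

end
end
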